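/- arXiv:2001.00830 — 5 statements merged into one kernel-verified Lean document; each statement's English description precedes it below -/
import Mathlib

section
/- Let H1 and H2 be complex Hilbert spaces with H2 finite-dimensional, and let m : S_2(H1) × S_2(H2) → ℂ be a bounded bilinear form. Then for every pair of sequences (S_i), (S̃_j) in the closed unit ball of S_2(H1) and every pair of sequences (T_i), (T̃_j) in the closed unit ball of S_2(H2) such that the iterated limits lim_i lim_j m(S_i S̃_j, T_i T̃_j) and lim_j lim_i m(S_i S̃_j, T_i T̃_j) both exist, there exist S, S̃ ∈ S_2(H1) that are weak limits of subsequences of (S_i) and (S̃_j) respectively, and T, T̃ ∈ S_2(H2) that are norm limits of subsequences of (T_i) and (T̃_j) respectively, such that both iterated limits equal m(S S̃, T T̃). In particular, m is biregular. -/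
/-!
`T ↦ (T eᵢ)ᵢ` identifies `S₂(H)` isometrically with `ℓ²(ι, H)`. Hence bounded sequences in `S₂(H₁)`
have weakly convergent subsequences, and by the Riesz representation every `m · B` is an
`S₂`-inner product, so it is weakly continuous. As `H₂` is finite-dimensional, bounded sequences in
`S₂(H₂)` have norm-convergent subsequences. Along such subsequences `Sᵢ S̃ⱼ` converges weakly when
either factor is frozen (for a frozen right factor this uses `⟨S*, T*⟩ = conj ⟨S, T⟩`) while
`Tᵢ T̃ⱼ` converges in norm, and the bound on `m` lets both iterated limits be taken factor by
factor: each equals `m (S S̃) (T T̃)`.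
-/

open Filter Topology

noncomputable section

variable (H : Type) [NormedAddCommGroup H] [InnerProductSpace ℂ H] [CompleteSpace H]

/-- The index set of a fixed Hilbert basis of `H`. -/
def hsIdx : Set H := (exists_hilbertBasis ℂ H).choose

/-- A fixed Hilbert basis of `H`. -/
def hsBasis : HilbertBasis (hsIdx H) ℂ H := (exists_hilbertBasis ℂ H).choose_spec.choose

variable {H}

/-- `T` is a Hilbert–Schmidt operator, i.e. `T ∈ S_2(H)`. -/
def IsHS (T : H →L[ℂ] H) : Prop := Summable fun i => ‖T (hsBasis H i)‖ ^ 2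

/-- The Hilbert–Schmidt norm `‖T‖₂ = (Tr (T* T))^(1/2)`. -/
def hsNorm (T : H →L[ℂ] H) : ℝ := Real.sqrt (∑' i, ‖T (hsBasis H i)‖ ^ 2)

/-- The Hilbert–Schmidt inner product `⟨S, T⟩ = Tr (T* S)` (linear in `S`,
conjugate-linear in `T`). -/
def hsInner (S T : H →L[ℂ] H) : ℂ := ∑' i, inner ℂ (T (hsBasis H i)) (S (hsBasis H i))

variable {H₁ H₂ : Type} [NormedAddCommGroup H₁] [InnerProductSpace ℂ H₁] [CompleteSpace H₁]
  [NormedAddCommGroup H₂] [InnerProductSpace ℂ H₂] [CompleteSpace H₂]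

/-- `m` is a bounded bilinear form on `S_2(H₁) × S_2(H₂)`. -/
structure IsHSBilinearForm (m : (H₁ →L[ℂ] H₁) → (H₂ →L[ℂ] H₂) → ℂ) : Prop where
  add_left : ∀ S S' T, IsHS S → IsHS S' → IsHS T → m (S + S') T = m S T + m S' T
  smul_left : ∀ (c : ℂ) S T, IsHS S → IsHS T → m (c • S) T = c * m S T
  add_right : ∀ S T T', IsHS S → IsHS T → IsHS T' → m S (T + T') = m S T + m S T'
  smul_right : ∀ (c : ℂ) S T, IsHS S → IsHS T → m S (c • T) = c * m S T
  bound : ∃ C : ℝ, ∀ S T, IsHS S → IsHS T → ‖m S T‖ ≤ C * hsNorm S * hsNorm T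

open scoped InnerProductSpace InnerProduct ComplexConjugate

section LpTwo

variable {ι : Type*}

theorem memℓp_two_iff {E : ι → Type*} [∀ i, NormedAddCommGroup (E i)] {f : ∀ i, E i} :
    Memℓp f 2 ↔ Summable fun i => ‖f i‖ ^ 2 := by
  rw [memℓp_gen_iff (by norm_num)]
  norm_num

theorem lp.hasSum_norm_sq {E : ι → Type*} [∀ i, NormedAddCommGroup (E i)] (f : lp E 2) :
    HasSum (fun i => ‖f i‖ ^ 2) (‖f‖ ^ 2) := by
  simpa using lp.hasSum_norm (p := 2) (by norm_num) f

theorem lp.summable_and_tsum_norm_mul_norm_le {E F : ι → Type*} [∀ i, NormedAddCommGroup (E i)]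
    [∀ i, NormedAddCommGroup (F i)] (f : lp E 2) (g : lp F 2) :
    (Summable fun i => ‖f i‖ * ‖g i‖) ∧ ∑' i, ‖f i‖ * ‖g i‖ ≤ ‖f‖ * ‖g‖ := by
  have hf := (lp.memℓp f).summable (by norm_num : 0 < (2 : ENNReal).toReal)
  have hg := (lp.memℓp g).summable (by norm_num : 0 < (2 : ENNReal).toReal)
  rw [lp.norm_eq_tsum_rpow (by norm_num) f, lp.norm_eq_tsum_rpow (by norm_num) g]
  exact Real.summable_and_inner_le_Lp_mul_Lq_tsum_of_nonneg (by simpa using .two_two)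
    (fun _ => norm_nonneg _) (fun _ => norm_nonneg _) hf hg

variable {𝕜 E : Type*} [RCLike 𝕜] [NormedAddCommGroup E] [NormedSpace 𝕜 E]

theorem lp.norm_tsum_smul_le (c : lp (fun _ : ι => 𝕜) 2) (f : lp (fun _ : ι => E) 2) :
    ‖∑' i, c i • f i‖ ≤ ‖f‖ * ‖c‖ := by
  obtain ⟨hsum, hle⟩ := lp.summable_and_tsum_norm_mul_norm_le c f
  calc ‖∑' i, c i • f i‖ ≤ ∑' i, ‖c i • f i‖ :=
        norm_tsum_le_tsum_norm (by simpa only [norm_smul] using hsum)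
    _ = ∑' i, ‖c i‖ * ‖f i‖ := by simp only [norm_smul]
    _ ≤ ‖f‖ * ‖c‖ := hle.trans_eq (mul_comm _ _)

variable [CompleteSpace E]

theorem lp.summable_smul (c : lp (fun _ : ι => 𝕜) 2) (f : lp (fun _ : ι => E) 2) :
    Summable fun i => c i • f i :=
  .of_norm_bounded (lp.summable_and_tsum_norm_mul_norm_le c f).1 fun _ => (norm_smul _ _).le

def lp.synthesis (f : lp (fun _ : ι => E) 2) : lp (fun _ : ι => 𝕜) 2 →L[𝕜] E :=
  LinearMap.mkContinuous
    { toFun := fun c => ∑' i, c i • f i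
      map_add' := fun c d => by
        simp only [lp.coeFn_add, Pi.add_apply, add_smul]
        exact (lp.summable_smul c f).tsum_add (lp.summable_smul d f)
      map_smul' := fun a c => by
        simp only [lp.coeFn_smul, Pi.smul_apply, smul_eq_mul, mul_smul, RingHom.id_apply]
        exact tsum_const_smul'' a }
    ‖f‖ (lp.norm_tsum_smul_le · f)

theorem lp.norm_synthesis_le (f : lp (fun _ : ι => E) 2) :
    ‖(lp.synthesis f : lp (fun _ : ι => 𝕜) 2 →L[𝕜] E)‖ ≤ ‖f‖ :=
  LinearMap.mkContinuous_norm_le _ (norm_nonneg f) _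

theorem lp.synthesis_single [DecidableEq ι] (f : lp (fun _ : ι => E) 2) (i : ι) :
    lp.synthesis f (lp.single 2 i (1 : 𝕜)) = f i := by
  change ∑' j, (lp.single 2 i (1 : 𝕜) : ι → 𝕜) j • f j = f i
  rw [tsum_eq_single i fun j hj => by simp [lp.single_apply, hj]]
  simp [lp.single_apply]

end LpTwo

theorem HilbertBasis.hasSum_norm_inner_sq {ι 𝕜 E : Type*} [RCLike 𝕜] [NormedAddCommGroup E]
    [InnerProductSpace 𝕜 E] (b : HilbertBasis ι 𝕜 E) (x : E) :
    HasSum (fun i => ‖⟪b i, x⟫_𝕜‖ ^ 2) (‖x‖ ^ 2) := by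
  simpa only [b.repr_apply_apply, b.repr.norm_map] using lp.hasSum_norm_sq (b.repr x)

theorem ContinuousLinearMap.norm_mul_apply_sq_le {𝕜 E : Type*} [RCLike 𝕜] [NormedAddCommGroup E]
    [NormedSpace 𝕜 E] (A T : E →L[𝕜] E) (x : E) : ‖(A * T) x‖ ^ 2 ≤ ‖A‖ ^ 2 * ‖T x‖ ^ 2 := by
  rw [← mul_pow]
  exact pow_le_pow_left₀ (norm_nonneg _) (A.le_opNorm _) 2

theorem ContinuousLinearMap.adjoint_mul {𝕜 E : Type*} [RCLike 𝕜] [NormedAddCommGroup E]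
    [InnerProductSpace 𝕜 E] [CompleteSpace E] (A B : E →L[𝕜] E) : (A * B)† = B† * A† :=
  ContinuousLinearMap.adjoint_comp A B

section WeakCompactness

variable {𝕜 V : Type*} [RCLike 𝕜] [NormedAddCommGroup V] [InnerProductSpace 𝕜 V] [CompleteSpace V]

/-- Sequential Banach–Alaoglu in the separable closed span `D` of the sequence, transported to `D`
by the Riesz representation and to `V` by the orthogonal projection onto `D`. -/
theorem exists_subseq_tendsto_inner {x : ℕ → V} {R : ℝ} (hx : ∀ n, ‖x n‖ ≤ R) :
    ∃ (y : V) (φ : ℕ → ℕ), StrictMono φ ∧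
      ∀ w, Tendsto (fun n => ⟪w, x (φ n)⟫_𝕜) atTop (𝓝 ⟪w, y⟫_𝕜) := by
  set D := (Submodule.span 𝕜 (Set.range x)).topologicalClosure
  have : TopologicalSpace.SeparableSpace D :=
    ((Set.countable_range x).isSeparable.span.closure).separableSpace
  have hxD : ∀ n, x n ∈ D := fun n =>
    Submodule.le_topologicalClosure _ (Submodule.subset_span ⟨n, rfl⟩)
  let u : ℕ → WeakDual 𝕜 D := fun n =>
    StrongDual.toWeakDual (InnerProductSpace.toDual 𝕜 D ⟨x n, hxD n⟩)
  have hu : ∀ n, u n ∈ WeakDual.toStrongDual ⁻¹' Metric.closedBall 0 R := fun n => by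
    simpa [u] using hx n
  obtain ⟨ℓ, -, φ, hφ, hℓ⟩ := WeakDual.isSeqCompact_closedBall 𝕜 D 0 R hu
  set y : D := (InnerProductSpace.toDual 𝕜 D).symm (WeakDual.toStrongDual ℓ)
  refine ⟨y, φ, hφ, fun w => ?_⟩
  have hproj : ∀ v : D, ⟪(v : V), w⟫_𝕜 = ⟪v, D.orthogonalProjectionOnto w⟫_𝕜 := fun v =>
    (D.inner_orthogonalProjectionOnto_eq_of_mem_left v w).symm
  have hlim : Tendsto (fun n => ⟪x (φ n), w⟫_𝕜) atTop (𝓝 ⟪(y : V), w⟫_𝕜) := by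
    rw [hproj y, InnerProductSpace.toDual_symm_apply]
    exact (((WeakDual.eval_continuous _).tendsto ℓ).comp hℓ).congr fun n =>
      (hproj ⟨x (φ n), hxD (φ n)⟩).symm
  simpa only [← starRingEnd_apply, inner_conj_symm] using hlim.star

end WeakCompactness

theorem isHS_iff_memℓp {T : H →L[ℂ] H} : IsHS T ↔ Memℓp (fun i => T (hsBasis H i)) 2 :=
  memℓp_two_iff.symm

def IsHS.toLp {T : H →L[ℂ] H} (hT : IsHS T) : lp (fun _ : hsIdx H => H) 2 :=
  ⟨fun i => T (hsBasis H i), isHS_iff_memℓp.1 hT⟩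

theorem hsNorm_nonneg (T : H →L[ℂ] H) : 0 ≤ hsNorm T :=
  Real.sqrt_nonneg _

theorem IsHS.hsNorm_eq {T : H →L[ℂ] H} (hT : IsHS T) : hsNorm T = ‖hT.toLp‖ := by
  rw [hsNorm, ← Real.sqrt_sq (norm_nonneg hT.toLp), ← (lp.hasSum_norm_sq hT.toLp).tsum_eq]
  rfl

theorem hsInner_eq_inner {S T : H →L[ℂ] H} (hS : IsHS S) (hT : IsHS T) :
    hsInner S T = ⟪hT.toLp, hS.toLp⟫_ℂ :=
  rfl

theorem IsHS.sub {T T' : H →L[ℂ] H} (hT : IsHS T) (hT' : IsHS T') : IsHS (T - T') :=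
  isHS_iff_memℓp.2 ((isHS_iff_memℓp.1 hT).sub (isHS_iff_memℓp.1 hT'))

theorem ext_hsBasis {T T' : H →L[ℂ] H} (h : ∀ i, T (hsBasis H i) = T' (hsBasis H i)) : T = T' :=
  ContinuousLinearMap.ext_on
    (Submodule.dense_iff_topologicalClosure_eq_top.2 (hsBasis H).dense_span)
    (Set.forall_mem_range.2 h)

def hsOfLp (f : lp (fun _ : hsIdx H => H) 2) : H →L[ℂ] H :=
  (lp.synthesis f).comp (hsBasis H).repr.toLinearIsometry.toContinuousLinearMap

theorem hsOfLp_apply_hsBasis (f : lp (fun _ : hsIdx H => H) 2) (i : hsIdx H) :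
    hsOfLp f (hsBasis H i) = f i := by
  classical
  simp [hsOfLp, HilbertBasis.repr_self, lp.synthesis_single]

theorem isHS_hsOfLp (f : lp (fun _ : hsIdx H => H) 2) : IsHS (hsOfLp f) :=
  isHS_iff_memℓp.2 (by simpa only [hsOfLp_apply_hsBasis] using lp.memℓp f)

theorem toLp_hsOfLp (f : lp (fun _ : hsIdx H => H) 2) : (isHS_hsOfLp f).toLp = f :=
  lp.ext (funext (hsOfLp_apply_hsBasis f))

theorem IsHS.hsOfLp_toLp {T : H →L[ℂ] H} (hT : IsHS T) : hsOfLp hT.toLp = T :=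
  ext_hsBasis (hsOfLp_apply_hsBasis _)

theorem hsOfLp_add (f g : lp (fun _ : hsIdx H => H) 2) : hsOfLp (f + g) = hsOfLp f + hsOfLp g :=
  ext_hsBasis fun _ => by simp [hsOfLp_apply_hsBasis]

theorem hsOfLp_smul (c : ℂ) (f : lp (fun _ : hsIdx H => H) 2) : hsOfLp (c • f) = c • hsOfLp f :=
  ext_hsBasis fun _ => by simp [hsOfLp_apply_hsBasis]

theorem norm_hsOfLp_le (f : lp (fun _ : hsIdx H => H) 2) : ‖hsOfLp f‖ ≤ ‖f‖ :=
  (hsOfLp f).opNorm_le_bound (norm_nonneg f) fun x =>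
    calc ‖hsOfLp f x‖ = ‖lp.synthesis (𝕜 := ℂ) f ((hsBasis H).repr x)‖ := rfl
      _ ≤ ‖lp.synthesis (𝕜 := ℂ) f‖ * ‖(hsBasis H).repr x‖ :=
        (lp.synthesis (𝕜 := ℂ) f).le_opNorm _
      _ ≤ ‖f‖ * ‖x‖ := by
        rw [(hsBasis H).repr.norm_map]
        exact mul_le_mul_of_nonneg_right (lp.norm_synthesis_le f) (norm_nonneg x)

theorem opNorm_le_hsNorm {T : H →L[ℂ] H} (hT : IsHS T) : ‖T‖ ≤ hsNorm T :=
  calc ‖T‖ = ‖hsOfLp hT.toLp‖ := by rw [hT.hsOfLp_toLp]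
    _ ≤ hsNorm T := (norm_hsOfLp_le _).trans_eq hT.hsNorm_eq.symm

theorem exists_hsInner_eq_of_bound {F : (H →L[ℂ] H) → ℂ} {C : ℝ}
    (hadd : ∀ A A', IsHS A → IsHS A' → F (A + A') = F A + F A')
    (hsmul : ∀ (c : ℂ) A, IsHS A → F (c • A) = c * F A)
    (hbound : ∀ A, IsHS A → ‖F A‖ ≤ C * hsNorm A) :
    ∃ M, IsHS M ∧ ∀ A, IsHS A → F A = hsInner A M := by
  let ℓ : lp (fun _ : hsIdx H => H) 2 →ₗ[ℂ] ℂ :=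
    { toFun := fun f => F (hsOfLp f)
      map_add' := fun f g => by
        rw [hsOfLp_add, hadd _ _ (isHS_hsOfLp f) (isHS_hsOfLp g)]
      map_smul' := fun c f => by
        rw [hsOfLp_smul, hsmul _ _ (isHS_hsOfLp f), smul_eq_mul, RingHom.id_apply] }
  have hℓ : ∀ f, ‖ℓ f‖ ≤ C * ‖f‖ := fun f => by
    change ‖F (hsOfLp f)‖ ≤ C * ‖f‖
    simpa only [(isHS_hsOfLp f).hsNorm_eq, toLp_hsOfLp] using hbound _ (isHS_hsOfLp f)
  let y := (InnerProductSpace.toDual ℂ _).symm (ℓ.mkContinuous C hℓ)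
  have hy : ∀ f, ⟪y, f⟫_ℂ = F (hsOfLp f) := fun f => InnerProductSpace.toDual_symm_apply
  refine ⟨hsOfLp y, isHS_hsOfLp y, fun A hA => ?_⟩
  calc F A = F (hsOfLp hA.toLp) := by rw [hA.hsOfLp_toLp]
    _ = ⟪y, hA.toLp⟫_ℂ := (hy _).symm
    _ = hsInner A (hsOfLp y) := by rw [hsInner_eq_inner hA (isHS_hsOfLp y), toLp_hsOfLp]

theorem IsHS.summable_norm_inner_sq {T : H →L[ℂ] H} (hT : IsHS T) :
    Summable fun p : hsIdx H × hsIdx H => ‖⟪hsBasis H p.2, T (hsBasis H p.1)⟫_ℂ‖ ^ 2 := by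
  rw [summable_prod_of_nonneg fun _ => sq_nonneg _]
  simp only [((hsBasis H).hasSum_norm_inner_sq _).tsum_eq]
  exact ⟨fun _ => ((hsBasis H).hasSum_norm_inner_sq _).summable, hT⟩

theorem IsHS.adjoint {T : H →L[ℂ] H} (hT : IsHS T) : IsHS (T†) := by
  refine ((summable_prod_of_nonneg fun _ => sq_nonneg _).1
    hT.summable_norm_inner_sq.prod_symm).2.congr fun i => ?_
  rw [← ((hsBasis H).hasSum_norm_inner_sq _).tsum_eq]
  exact tsum_congr fun j => by
    rw [Prod.swap_prod_mk, ContinuousLinearMap.adjoint_inner_right, norm_inner_symm]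

/-- Both sides are the two iterated sums of the matrix entries `⟨S eⱼ, eᵢ⟩ ⟨eᵢ, T eⱼ⟩`, which are
absolutely summable over pairs since both matrices are square-summable. -/
theorem hsInner_adjoint_adjoint {S T : H →L[ℂ] H} (hS : IsHS S) (hT : IsHS T) :
    hsInner (S†) (T†) = conj (hsInner S T) := by
  set e := hsBasis H
  let F : hsIdx H → hsIdx H → ℂ := fun j i => ⟪S (e j), e i⟫_ℂ * ⟪e i, T (e j)⟫_ℂ
  have hF : Summable (Function.uncurry F) := by
    refine .of_norm_bounded
      ((hS.summable_norm_inner_sq.add hT.summable_norm_inner_sq).div_const 2) fun p => ?_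
    rw [Function.uncurry_apply_pair, norm_mul, norm_inner_symm]
    linarith [two_mul_le_add_sq ‖⟪e p.2, S (e p.1)⟫_ℂ‖ ‖⟪e p.2, T (e p.1)⟫_ℂ‖]
  calc hsInner (S†) (T†) = ∑' i, ∑' j, F j i := tsum_congr fun i => by
        rw [← e.tsum_inner_mul_inner]
        exact tsum_congr fun j => by
          rw [ContinuousLinearMap.adjoint_inner_left, ContinuousLinearMap.adjoint_inner_right,
            mul_comm]
    _ = ∑' j, ∑' i, F j i := hF.tsum_comm
    _ = conj (hsInner S T) := by
        rw [hsInner, Complex.conj_tsum]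
        exact tsum_congr fun j => by rw [inner_conj_symm, ← e.tsum_inner_mul_inner]

theorem IsHS.mul_left {T : H →L[ℂ] H} (hT : IsHS T) (A : H →L[ℂ] H) : IsHS (A * T) :=
  .of_nonneg_of_le (fun _ => sq_nonneg _) (fun _ => A.norm_mul_apply_sq_le T _)
    (Summable.mul_left (‖A‖ ^ 2) hT)

theorem IsHS.mul_right {T : H →L[ℂ] H} (hT : IsHS T) (B : H →L[ℂ] H) : IsHS (T * B) := by
  simpa only [ContinuousLinearMap.adjoint_mul, ContinuousLinearMap.adjoint_adjoint] using
    (hT.adjoint.mul_left (B†)).adjoint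

theorem hsNorm_mul_le (A : H →L[ℂ] H) {T : H →L[ℂ] H} (hT : IsHS T) :
    hsNorm (A * T) ≤ ‖A‖ * hsNorm T :=
  calc hsNorm (A * T) ≤ √(∑' i, ‖A‖ ^ 2 * ‖T (hsBasis H i)‖ ^ 2) :=
        Real.sqrt_le_sqrt ((hT.mul_left A).tsum_le_tsum (fun _ => A.norm_mul_apply_sq_le T _)
          (Summable.mul_left _ hT))
    _ = ‖A‖ * hsNorm T := by
        rw [tsum_mul_left, Real.sqrt_mul (sq_nonneg _), Real.sqrt_sq (norm_nonneg _), hsNorm]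

theorem hsInner_mul_left (A S W : H →L[ℂ] H) : hsInner (A * S) W = hsInner S (A† * W) :=
  tsum_congr fun _ => (ContinuousLinearMap.adjoint_inner_left A _ _).symm

theorem hsInner_mul_right {S W : H →L[ℂ] H} (hS : IsHS S) (hW : IsHS W) (B : H →L[ℂ] H) :
    hsInner (S * B) W = hsInner S (W * B†) := by
  have h₁ := hsInner_adjoint_adjoint (hS.mul_right B) hW
  have h₂ := hsInner_adjoint_adjoint hS (hW.mul_right (B†))
  rw [ContinuousLinearMap.adjoint_mul, hsInner_mul_left, ContinuousLinearMap.adjoint_adjoint] at h₁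
  rw [ContinuousLinearMap.adjoint_mul, ContinuousLinearMap.adjoint_adjoint] at h₂
  exact star_injective (h₁.symm.trans h₂)

def WeakTendstoHS (A : ℕ → H →L[ℂ] H) (A₀ : H →L[ℂ] H) : Prop :=
  ∀ W, IsHS W → Tendsto (fun k => hsInner (A k) W) atTop (𝓝 (hsInner A₀ W))

theorem exists_subseq_weakTendstoHS {S : ℕ → H →L[ℂ] H} {R : ℝ} (hS : ∀ n, IsHS (S n))
    (hSR : ∀ n, hsNorm (S n) ≤ R) :
    ∃ (S₀ : H →L[ℂ] H) (φ : ℕ → ℕ), StrictMono φ ∧ IsHS S₀ ∧ WeakTendstoHS (S ∘ φ) S₀ := by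
  obtain ⟨y, φ, hφ, hy⟩ := exists_subseq_tendsto_inner (𝕜 := ℂ) (x := fun n => (hS n).toLp)
    fun n => (hS n).hsNorm_eq ▸ hSR n
  refine ⟨hsOfLp y, φ, hφ, isHS_hsOfLp y, fun W hW => ?_⟩
  rw [hsInner_eq_inner (isHS_hsOfLp y) hW, toLp_hsOfLp]
  exact hy hW.toLp

theorem WeakTendstoHS.const_mul {A : ℕ → H →L[ℂ] H} {A₀ : H →L[ℂ] H} (h : WeakTendstoHS A A₀)
    (B : H →L[ℂ] H) : WeakTendstoHS (fun k => B * A k) (B * A₀) := fun W hW => by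
  simpa only [hsInner_mul_left] using h _ (hW.mul_left (B†))

theorem WeakTendstoHS.mul_const {A : ℕ → H →L[ℂ] H} {A₀ : H →L[ℂ] H} (h : WeakTendstoHS A A₀)
    (hA : ∀ k, IsHS (A k)) (hA₀ : IsHS A₀) (B : H →L[ℂ] H) :
    WeakTendstoHS (fun k => A k * B) (A₀ * B) := fun W hW => by
  rw [hsInner_mul_right hA₀ hW]
  exact (h _ (hW.mul_right (B†))).congr fun k => (hsInner_mul_right (hA k) hW B).symm

section FiniteDimensional

variable [FiniteDimensional ℂ H]

theorem finite_hsIdx : Finite (hsIdx H) :=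
  (hsBasis H).orthonormal.linearIndependent.finite

theorem isHS_of_finiteDimensional (T : H →L[ℂ] H) : IsHS T :=
  have := finite_hsIdx (H := H)
  .of_finite

theorem continuous_hsNorm : Continuous (hsNorm : (H →L[ℂ] H) → ℝ) := by
  have := finite_hsIdx (H := H)
  have := Fintype.ofFinite (hsIdx H)
  have hsNorm_eq_sum : hsNorm = fun T : H →L[ℂ] H => √(∑ i, ‖T (hsBasis H i)‖ ^ 2) :=
    funext fun T => by rw [hsNorm, tsum_fintype]
  rw [hsNorm_eq_sum]
  fun_prop

theorem tendsto_hsNorm_sub_of_tendsto {T : ℕ → H →L[ℂ] H} {T₀ : H →L[ℂ] H}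
    (h : Tendsto T atTop (𝓝 T₀)) : Tendsto (fun k => hsNorm (T k - T₀)) atTop (𝓝 0) := by
  have h0 : hsNorm (0 : H →L[ℂ] H) = 0 := by simp [hsNorm]
  simpa only [h0, Function.comp_def] using
    (continuous_hsNorm.tendsto 0).comp (tendsto_sub_nhds_zero_iff.2 h)

end FiniteDimensional

theorem exists_subseq_weakTendstoHS_tendsto {F : Type*} [NormedAddCommGroup F] [ProperSpace F]
    {S : ℕ → H →L[ℂ] H} {T : ℕ → F} {R R' : ℝ} (hS : ∀ i, IsHS (S i))
    (hSR : ∀ i, hsNorm (S i) ≤ R) (hTR : ∀ i, ‖T i‖ ≤ R') :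
    ∃ (S₀ : H →L[ℂ] H) (T₀ : F) (φ : ℕ → ℕ), StrictMono φ ∧ IsHS S₀ ∧
      WeakTendstoHS (S ∘ φ) S₀ ∧ Tendsto (T ∘ φ) atTop (𝓝 T₀) := by
  obtain ⟨T₀, -, ρ, hρ, hTρ⟩ := (isCompact_closedBall (0 : F) R').tendsto_subseq
    fun i => mem_closedBall_zero_iff.2 (hTR i)
  obtain ⟨S₀, σ, hσ, hS₀, hSσ⟩ :=
    exists_subseq_weakTendstoHS (fun k => hS (ρ k)) (fun k => hSR (ρ k))
  exact ⟨S₀, T₀, ρ ∘ σ, hρ.comp hσ, hS₀, hSσ, hTρ.comp hσ.tendsto_atTop⟩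

theorem eq_of_tendsto_iterated_of_subseq {X : Type*} [TopologicalSpace X] [T2Space X]
    {F : ℕ → ℕ → X} {g G : ℕ → X} {L L' : X} {φ ψ : ℕ → ℕ}
    (hφ : Tendsto φ atTop atTop) (hψ : Tendsto ψ atTop atTop)
    (hg : ∀ i, Tendsto (F i) atTop (𝓝 (g i))) (hgL : Tendsto g atTop (𝓝 L))
    (hG : ∀ i, Tendsto (fun k => F i (ψ k)) atTop (𝓝 (G i)))
    (hGL : Tendsto (fun k => G (φ k)) atTop (𝓝 L')) : L = L' := by
  obtain rfl : g = G := funext fun i => tendsto_nhds_unique ((hg i).comp hψ) (hG i)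
  exact tendsto_nhds_unique (hgL.comp hφ) hGL

namespace IsHSBilinearForm

variable {m : (H₁ →L[ℂ] H₁) → (H₂ →L[ℂ] H₂) → ℂ}

theorem exists_nonneg_bound (hm : IsHSBilinearForm m) :
    ∃ C, 0 ≤ C ∧ ∀ S T, IsHS S → IsHS T → ‖m S T‖ ≤ C * hsNorm S * hsNorm T := by
  obtain ⟨C, hC⟩ := hm.bound
  refine ⟨max C 0, le_max_right _ _, fun S T hS hT => (hC S T hS hT).trans ?_⟩
  rw [mul_assoc, mul_assoc]
  exact mul_le_mul_of_nonneg_right (le_max_left _ _)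
    (mul_nonneg (hsNorm_nonneg S) (hsNorm_nonneg T))

theorem exists_hsInner_eq (hm : IsHSBilinearForm m) {B : H₂ →L[ℂ] H₂} (hB : IsHS B) :
    ∃ M, IsHS M ∧ ∀ A, IsHS A → m A B = hsInner A M := by
  obtain ⟨C, hC⟩ := hm.bound
  exact exists_hsInner_eq_of_bound (C := C * hsNorm B)
    (fun A A' hA hA' => hm.add_left A A' B hA hA' hB) (fun c A hA => hm.smul_left c A B hA hB)
    fun A hA => (hC A B hA hB).trans_eq (by ring)

/-- Split `m (A k) (B k) = m (A k) (B k - B₀) + m (A k) B₀`: the first term tends to `0` by the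
bound on `m`, the second converges because `m · B₀` is an inner product against a fixed operator. -/
theorem tendsto_of_weakTendstoHS (hm : IsHSBilinearForm m) {A : ℕ → H₁ →L[ℂ] H₁}
    {A₀ : H₁ →L[ℂ] H₁} {R : ℝ} (hA : ∀ k, IsHS (A k)) (hAR : ∀ k, hsNorm (A k) ≤ R)
    (hA₀ : IsHS A₀) (hAA₀ : WeakTendstoHS A A₀) {B : ℕ → H₂ →L[ℂ] H₂} {B₀ : H₂ →L[ℂ] H₂}
    (hB : ∀ k, IsHS (B k)) (hB₀ : IsHS B₀)
    (hBB₀ : Tendsto (fun k => hsNorm (B k - B₀)) atTop (𝓝 0)) :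
    Tendsto (fun k => m (A k) (B k)) atTop (𝓝 (m A₀ B₀)) := by
  obtain ⟨C, hC, hbound⟩ := hm.exists_nonneg_bound
  obtain ⟨M, hM, hmM⟩ := hm.exists_hsInner_eq hB₀
  have hsplit : ∀ k, m (A k) (B k) = m (A k) (B k - B₀) + hsInner (A k) M := fun k => by
    rw [← hmM _ (hA k), ← hm.add_right _ _ _ (hA k) ((hB k).sub hB₀) hB₀, sub_add_cancel]
  have hsmall : Tendsto (fun k => m (A k) (B k - B₀)) atTop (𝓝 0) := by
    refine squeeze_zero_norm (fun k => (hbound _ _ (hA k) ((hB k).sub hB₀)).trans ?_)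
      (by simpa using hBB₀.const_mul (C * R))
    exact mul_le_mul_of_nonneg_right (mul_le_mul_of_nonneg_left (hAR k) hC) (hsNorm_nonneg _)
  rw [hmM _ hA₀, ← zero_add (hsInner A₀ M)]
  exact (hsmall.add (hAA₀ M hM)).congr fun k => (hsplit k).symm

variable [FiniteDimensional ℂ H₂]

theorem tendsto_mul_const (hm : IsHSBilinearForm m) {A : ℕ → H₁ →L[ℂ] H₁} {A₀ X : H₁ →L[ℂ] H₁}
    {R : ℝ} (hA : ∀ k, IsHS (A k)) (hAR : ∀ k, hsNorm (A k) ≤ R) (hA₀ : IsHS A₀) (hX : IsHS X)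
    (hAA₀ : WeakTendstoHS A A₀) {B : ℕ → H₂ →L[ℂ] H₂} {B₀ : H₂ →L[ℂ] H₂}
    (hBB₀ : Tendsto B atTop (𝓝 B₀)) (Y : H₂ →L[ℂ] H₂) :
    Tendsto (fun k => m (A k * X) (B k * Y)) atTop (𝓝 (m (A₀ * X) (B₀ * Y))) :=
  hm.tendsto_of_weakTendstoHS (fun k => (hA k).mul_right X)
    (fun k => (hsNorm_mul_le _ hX).trans <| mul_le_mul_of_nonneg_right
      ((opNorm_le_hsNorm (hA k)).trans (hAR k)) (hsNorm_nonneg X))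
    (hA₀.mul_right X) (hAA₀.mul_const hA hA₀ X) (fun _ => isHS_of_finiteDimensional _)
    (isHS_of_finiteDimensional _) (tendsto_hsNorm_sub_of_tendsto (hBB₀.mul_const Y))

theorem tendsto_const_mul (hm : IsHSBilinearForm m) {A : ℕ → H₁ →L[ℂ] H₁} {A₀ : H₁ →L[ℂ] H₁}
    {R : ℝ} (hA : ∀ k, IsHS (A k)) (hAR : ∀ k, hsNorm (A k) ≤ R) (hA₀ : IsHS A₀)
    (hAA₀ : WeakTendstoHS A A₀) (X : H₁ →L[ℂ] H₁) {B : ℕ → H₂ →L[ℂ] H₂} {B₀ : H₂ →L[ℂ] H₂}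
    (hBB₀ : Tendsto B atTop (𝓝 B₀)) (Y : H₂ →L[ℂ] H₂) :
    Tendsto (fun k => m (X * A k) (Y * B k)) atTop (𝓝 (m (X * A₀) (Y * B₀))) :=
  hm.tendsto_of_weakTendstoHS (fun k => (hA k).mul_left X)
    (fun k => (hsNorm_mul_le X (hA k)).trans <| mul_le_mul_of_nonneg_left (hAR k) (norm_nonneg X))
    (hA₀.mul_left X) (hAA₀.const_mul X) (fun _ => isHS_of_finiteDimensional _)
    (isHS_of_finiteDimensional _) (tendsto_hsNorm_sub_of_tendsto (tendsto_const_nhds.mul hBB₀))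

end IsHSBilinearForm

/-- Let `H₁`, `H₂` be complex Hilbert spaces with `H₂` finite-dimensional and
let `m` be a bounded bilinear form on `S_2(H₁) × S_2(H₂)`. For all sequences `(S i)`, `(S' j)`
in the closed unit ball of `S_2(H₁)` and `(T i)`, `(T' j)` in the closed unit ball of `S_2(H₂)`
such that both iterated limits of `m (Sᵢ S̃ⱼ) (Tᵢ T̃ⱼ)` exist, there are weak limits `Sl, S'l` of
subsequences of `(S i)`, `(S' j)` and norm limits `Tl, T'l` of subsequences of `(T i)`, `(T' j)`
such that both iterated limits equal `m (Sl * S'l) (Tl * T'l)`; in particular they are equal,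
i.e. `m` is biregular. -/
theorem biregular_of_finiteDimensional_right
    [FiniteDimensional ℂ H₂]
    (m : (H₁ →L[ℂ] H₁) → (H₂ →L[ℂ] H₂) → ℂ) (hm : IsHSBilinearForm m)
    (S S' : ℕ → H₁ →L[ℂ] H₁) (T T' : ℕ → H₂ →L[ℂ] H₂)
    (hS : ∀ i, IsHS (S i) ∧ hsNorm (S i) ≤ 1) (hS' : ∀ j, IsHS (S' j) ∧ hsNorm (S' j) ≤ 1)
    (hT : ∀ i, IsHS (T i) ∧ hsNorm (T i) ≤ 1) (hT' : ∀ j, IsHS (T' j) ∧ hsNorm (T' j) ≤ 1)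
    (g h : ℕ → ℂ) (L₁ L₂ : ℂ)
    (hg : ∀ i, Tendsto (fun j => m (S i * S' j) (T i * T' j)) atTop (𝓝 (g i)))
    (hgL : Tendsto g atTop (𝓝 L₁))
    (hh : ∀ j, Tendsto (fun i => m (S i * S' j) (T i * T' j)) atTop (𝓝 (h j)))
    (hhL : Tendsto h atTop (𝓝 L₂)) :
    ∃ (Sl S'l : H₁ →L[ℂ] H₁) (Tl T'l : H₂ →L[ℂ] H₂) (φ ψ ρ τ : ℕ → ℕ),
      StrictMono φ ∧ StrictMono ψ ∧ StrictMono ρ ∧ StrictMono τ ∧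
      IsHS Sl ∧ IsHS S'l ∧ IsHS Tl ∧ IsHS T'l ∧
      (∀ W, IsHS W → Tendsto (fun k => hsInner (S (φ k)) W) atTop (𝓝 (hsInner Sl W))) ∧
      (∀ W, IsHS W → Tendsto (fun k => hsInner (S' (ψ k)) W) atTop (𝓝 (hsInner S'l W))) ∧
      Tendsto (fun k => hsNorm (T (ρ k) - Tl)) atTop (𝓝 0) ∧
      Tendsto (fun k => hsNorm (T' (τ k) - T'l)) atTop (𝓝 0) ∧
      L₁ = m (Sl * S'l) (Tl * T'l) ∧ L₂ = m (Sl * S'l) (Tl * T'l) ∧ L₁ = L₂ := by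
  obtain ⟨Sl, Tl, φ, hφ, hSl, hSφ, hTφ⟩ := exists_subseq_weakTendstoHS_tendsto
    (fun i => (hS i).1) (fun i => (hS i).2) fun i => (opNorm_le_hsNorm (hT i).1).trans (hT i).2
  obtain ⟨S'l, T'l, ψ, hψ, hS'l, hS'ψ, hT'ψ⟩ := exists_subseq_weakTendstoHS_tendsto
    (fun j => (hS' j).1) (fun j => (hS' j).2) fun j => (opNorm_le_hsNorm (hT' j).1).trans (hT' j).2
  have hL₁ : L₁ = m (Sl * S'l) (Tl * T'l) :=
    eq_of_tendsto_iterated_of_subseq (G := fun i => m (S i * S'l) (T i * T'l))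
      hφ.tendsto_atTop hψ.tendsto_atTop hg hgL
      (fun i => hm.tendsto_const_mul (fun k => (hS' (ψ k)).1) (fun k => (hS' (ψ k)).2) hS'l hS'ψ
        (S i) hT'ψ (T i))
      (hm.tendsto_mul_const (fun k => (hS (φ k)).1) (fun k => (hS (φ k)).2) hSl hS'l hSφ hTφ T'l)
  have hL₂ : L₂ = m (Sl * S'l) (Tl * T'l) :=
    eq_of_tendsto_iterated_of_subseq (G := fun j => m (Sl * S' j) (Tl * T' j))
      hψ.tendsto_atTop hφ.tendsto_atTop hh hhL
      (fun j => hm.tendsto_mul_const (fun k => (hS (φ k)).1) (fun k => (hS (φ k)).2) hSl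
        (hS' j).1 hSφ hTφ (T' j))
      (hm.tendsto_const_mul (fun k => (hS' (ψ k)).1) (fun k => (hS' (ψ k)).2) hS'l hS'ψ Sl hT'ψ Tl)
  exact ⟨Sl, S'l, Tl, T'l, φ, ψ, φ, ψ, hφ, hψ, hφ, hψ, hSl, hS'l, isHS_of_finiteDimensional Tl,
    isHS_of_finiteDimensional T'l, hSφ, hS'ψ, tendsto_hsNorm_sub_of_tendsto hTφ,
    tendsto_hsNorm_sub_of_tendsto hT'ψ, hL₁, hL₂, hL₁.trans hL₂.symm⟩
end
end

section
/- Let H be a complex Hilbert space and β ∈ H. For every bounded sequence (T_i) in B(H) and every bounded sequence (ζ_j) in H such that the iterated limits lim_i lim_j ⟨T_i ζ_j, β⟩ and lim_j lim_i ⟨T_i ζ_j, β⟩ both exist, these two iterated limits are equal. -/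
/-!
Since `⟪T i (ζ j), β⟫ = ⟪ζ j, (T i)† β⟫`, the form is the inner product of two bounded
families in `H`. Bounded sets of a Hilbert space are weakly relatively compact, so along
ultrafilters refining the two limit filters `ζ j ⇀ z` and `(T i)† β ⇀ w` weakly; both iterated
limits are then `⟪z, w⟫`.
-/

open Filter Topology Metric
open scoped InnerProductSpace

section WeakLimit

variable {𝕜 E ι : Type*} [RCLike 𝕜] [NormedAddCommGroup E] [InnerProductSpace 𝕜 E]
  [CompleteSpace E]

/-- Banach–Alaoglu, transported to `E` through the Riesz isomorphism `E ≃ StrongDual 𝕜 E`. -/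
theorem exists_tendsto_inner_left_of_norm_le {x : ι → E} {C : ℝ} (hx : ∀ n, ‖x n‖ ≤ C)
    (F : Ultrafilter ι) :
    ∃ z : E, ∀ y : E, Tendsto (fun n => ⟪x n, y⟫_𝕜) F (𝓝 ⟪z, y⟫_𝕜) := by
  let φ : ι → WeakDual 𝕜 E := fun n => StrongDual.toWeakDual (InnerProductSpace.toDual 𝕜 E (x n))
  have hφ : ∀ n, φ n ∈ WeakDual.toStrongDual ⁻¹' closedBall (0 : StrongDual 𝕜 E) C := fun n => by
    simpa [φ] using hx n
  obtain ⟨ψ, -, hψ⟩ := (WeakDual.isCompact_closedBall (0 : StrongDual 𝕜 E) C).ultrafilter_le_nhds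
    (F.map φ) (le_principal_iff.mpr (Filter.mem_map.mpr (Eventually.of_forall hφ)))
  refine ⟨(InnerProductSpace.toDual 𝕜 E).symm (WeakDual.toStrongDual ψ), fun y => ?_⟩
  have hψy : ψ y = ⟪(InnerProductSpace.toDual 𝕜 E).symm (WeakDual.toStrongDual ψ), y⟫_𝕜 := by
    rw [← InnerProductSpace.toDual_apply_apply, LinearIsometryEquiv.apply_symm_apply]
    rfl
  rw [← hψy]
  exact tendsto_iff_forall_eval_tendsto_topDualPairing.mp hψ y

theorem exists_tendsto_inner_of_norm_le {x : ι → E} {C : ℝ} (hx : ∀ n, ‖x n‖ ≤ C)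
    (F : Ultrafilter ι) :
    ∃ z : E, ∀ y : E, Tendsto (fun n => ⟪x n, y⟫_𝕜) F (𝓝 ⟪z, y⟫_𝕜) ∧
      Tendsto (fun n => ⟪y, x n⟫_𝕜) F (𝓝 ⟪y, z⟫_𝕜) := by
  obtain ⟨z, hz⟩ := exists_tendsto_inner_left_of_norm_le (𝕜 := 𝕜) hx F
  refine ⟨z, fun y => ⟨hz y, ?_⟩⟩
  simpa only [RCLike.star_def, inner_conj_symm] using (hz y).star

end WeakLimit

theorem inner_iterated_limits_eq {𝕜 E ι κ : Type*} [RCLike 𝕜] [NormedAddCommGroup E]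
    [InnerProductSpace 𝕜 E] [CompleteSpace E] {l : Filter ι} {l' : Filter κ} [l.NeBot]
    [l'.NeBot] {x : κ → E} {y : ι → E} {Cx Cy : ℝ} (hx : ∀ j, ‖x j‖ ≤ Cx)
    (hy : ∀ i, ‖y i‖ ≤ Cy) {g : ι → 𝕜} {h : κ → 𝕜} {L₁ L₂ : 𝕜}
    (hg : ∀ i, Tendsto (fun j => ⟪x j, y i⟫_𝕜) l' (𝓝 (g i))) (hgL : Tendsto g l (𝓝 L₁))
    (hh : ∀ j, Tendsto (fun i => ⟪x j, y i⟫_𝕜) l (𝓝 (h j))) (hhL : Tendsto h l' (𝓝 L₂)) :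
    L₁ = L₂ := by
  obtain ⟨z, hz⟩ := exists_tendsto_inner_of_norm_le (𝕜 := 𝕜) hx (Ultrafilter.of l')
  obtain ⟨w, hw⟩ := exists_tendsto_inner_of_norm_le (𝕜 := 𝕜) hy (Ultrafilter.of l)
  have hl : (Ultrafilter.of l : Filter ι) ≤ l := Ultrafilter.of_le l
  have hl' : (Ultrafilter.of l' : Filter κ) ≤ l' := Ultrafilter.of_le l'
  have hg_eq : ∀ i, g i = ⟪z, y i⟫_𝕜 := fun i =>
    tendsto_nhds_unique ((hg i).mono_left hl') (hz (y i)).1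
  have hh_eq : ∀ j, h j = ⟪x j, w⟫_𝕜 := fun j =>
    tendsto_nhds_unique ((hh j).mono_left hl) (hw (x j)).2
  have hL₁ : L₁ = ⟪z, w⟫_𝕜 :=
    tendsto_nhds_unique (hgL.mono_left hl) ((hw z).2.congr fun i => (hg_eq i).symm)
  have hL₂ : L₂ = ⟪z, w⟫_𝕜 :=
    tendsto_nhds_unique (hhL.mono_left hl') ((hz w).1.congr fun j => (hh_eq j).symm)
  rw [hL₁, hL₂]

theorem norm_adjoint_apply_le {𝕜 E : Type*} [RCLike 𝕜] [NormedAddCommGroup E]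
    [InnerProductSpace 𝕜 E] [CompleteSpace E] (T : E →L[𝕜] E) {C : ℝ} (hT : ‖T‖ ≤ C) (β : E) :
    ‖ContinuousLinearMap.adjoint T β‖ ≤ C * ‖β‖ :=
  calc ‖ContinuousLinearMap.adjoint T β‖ ≤ ‖ContinuousLinearMap.adjoint T‖ * ‖β‖ :=
        (ContinuousLinearMap.adjoint T).le_opNorm β
    _ = ‖T‖ * ‖β‖ := by rw [LinearIsometryEquiv.norm_map]
    _ ≤ C * ‖β‖ := by gcongr

/-- Let `H` be a complex Hilbert space and `β ∈ H`. For every bounded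
sequence `(T i)` in `B(H)` and every bounded sequence `(ζ j)` in `H` such that the iterated
limits `lim_i lim_j ⟪T i (ζ j), β⟫` and `lim_j lim_i ⟪T i (ζ j), β⟫` both exist, these two
iterated limits are equal. -/
theorem arens_regular_eval_form {H : Type} [NormedAddCommGroup H] [InnerProductSpace ℂ H]
    [CompleteSpace H] (β : H)
    (T : ℕ → H →L[ℂ] H) (ζ : ℕ → H)
    (hT : ∃ C : ℝ, ∀ i, ‖T i‖ ≤ C) (hζ : ∃ C : ℝ, ∀ j, ‖ζ j‖ ≤ C)
    (g h : ℕ → ℂ) (L₁ L₂ : ℂ)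
    (hg : ∀ i, Tendsto (fun j => (inner ℂ (T i (ζ j)) β : ℂ)) atTop (𝓝 (g i)))
    (hgL : Tendsto g atTop (𝓝 L₁))
    (hh : ∀ j, Tendsto (fun i => (inner ℂ (T i (ζ j)) β : ℂ)) atTop (𝓝 (h j)))
    (hhL : Tendsto h atTop (𝓝 L₂)) :
    L₁ = L₂ := by
  obtain ⟨Cζ, hCζ⟩ := hζ
  obtain ⟨CT, hCT⟩ := hT
  have h_inner : ∀ i j, ⟪T i (ζ j), β⟫_ℂ = ⟪ζ j, ContinuousLinearMap.adjoint (T i) β⟫_ℂ :=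
    fun i j => (ContinuousLinearMap.adjoint_inner_right (T i) (ζ j) β).symm
  simp only [h_inner] at hg hh
  exact inner_iterated_limits_eq hCζ (fun i => norm_adjoint_apply_le (T i) (hCT i) β) hg hgL hh hhL
end

section
/- Let H1 and H2 be infinite-dimensional complex Hilbert spaces. Then there exist a bounded bilinear form m : S_2(H1) × S_2(H2) → ℂ, sequences (S_i), (S̃_j) in the closed unit ball of S_2(H1), and sequences (T_i), (T̃_j) in the closed unit ball of S_2(H2) such that lim_i lim_j m(S_i S̃_j, T_i T̃_j) = 0 while lim_j lim_i m(S_i S̃_j, T_i T̃_j) = 1. In particular, there exists a bounded bilinear form on S_2(H1) × S_2(H2) that is not biregular. -/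
open Filter Topology

noncomputable section

variable (H : Type) [NormedAddCommGroup H] [InnerProductSpace ℂ H] [CompleteSpace H]

variable {H}

variable {H₁ H₂ : Type} [NormedAddCommGroup H₁] [InnerProductSpace ℂ H₁] [CompleteSpace H₁]
  [NormedAddCommGroup H₂] [InnerProductSpace ℂ H₂] [CompleteSpace H₂]

/-!
Take orthonormal sequences `(eₙ)` in `H₁` and `(fₙ)` in `H₂` from the fixed Hilbert bases and
pair Hilbert–Schmidt operators through their lower triangular matrix entries:
`m(S, T) = ∑_{n ≤ k} ⟪e_k, S e_n⟫ ⟪f_k, T f_n⟫`. Since the entries of `S` are square summable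
with sum at most `‖S‖₂²` (Bessel), Cauchy–Schwarz gives `|m(S, T)| ≤ ‖S‖₂ ‖T‖₂`.
With `Sᵢ = eᵢ ⊗ e₀*` and `S̃ⱼ = e₀ ⊗ eⱼ*` the product `Sᵢ S̃ⱼ = eᵢ ⊗ eⱼ*` is a matrix unit, and
likewise for `T`, so `m(Sᵢ S̃ⱼ, Tᵢ T̃ⱼ) = [j ≤ i]`, whose iterated limits are `0` and `1`.
-/

open InnerProductSpace

lemma summable_mul_and_tsum_mul_le_sqrt_mul_sqrt {ι : Type*} {f g : ι → ℝ} (hf : ∀ i, 0 ≤ f i)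
    (hg : ∀ i, 0 ≤ g i) (hf₂ : Summable fun i => f i ^ 2) (hg₂ : Summable fun i => g i ^ 2) :
    Summable (fun i => f i * g i) ∧
      ∑' i, f i * g i ≤ √(∑' i, f i ^ 2) * √(∑' i, g i ^ 2) := by
  simpa [Real.sqrt_eq_rpow] using Real.summable_and_inner_le_Lp_mul_Lq_tsum_of_nonneg
    .two_two hf hg (by simpa using hf₂) (by simpa using hg₂)

section Orthonormal

variable {E : Type*} [NormedAddCommGroup E] [InnerProductSpace ℂ E]

lemma rankOne_mul_rankOne_of_norm_eq_one {z : E} (hz : ‖z‖ = 1) (x y : E) :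
    rankOne ℂ x z * rankOne ℂ z y = rankOne ℂ x y := by
  rw [ContinuousLinearMap.mul_def, rankOne_comp_rankOne, inner_self_eq_norm_sq_to_K, hz]
  simp

lemma Orthonormal.summable_norm_inner_apply_sq {ι : Type*} {e : ι → E} (he : Orthonormal ℂ e)
    {S : E →L[ℂ] E} (hS : Summable fun n => ‖S (e n)‖ ^ 2) :
    Summable fun p : ι × ι => ‖⟪e p.2, S (e p.1)⟫_ℂ‖ ^ 2 := by
  rw [summable_prod_of_nonneg fun _ => sq_nonneg _]
  exact ⟨fun n => he.inner_products_summable (S (e n)), .of_nonneg_of_le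
    (fun _ => tsum_nonneg fun _ => sq_nonneg _) (fun n => he.tsum_inner_products_le (S (e n))) hS⟩

lemma Orthonormal.tsum_norm_inner_apply_sq_le {ι : Type*} {e : ι → E} (he : Orthonormal ℂ e)
    {S : E →L[ℂ] E} (hS : Summable fun n => ‖S (e n)‖ ^ 2) :
    ∑' p : ι × ι, ‖⟪e p.2, S (e p.1)⟫_ℂ‖ ^ 2 ≤ ∑' n, ‖S (e n)‖ ^ 2 := by
  have hrow (n : ι) := he.inner_products_summable (S (e n))
  rw [(he.summable_norm_inner_apply_sq hS).tsum_prod' hrow]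
  exact Summable.tsum_le_tsum (fun n => he.tsum_inner_products_le (S (e n)))
    (he.summable_norm_inner_apply_sq hS).prod hS

end Orthonormal

lemma infinite_hsIdx (h : ¬ FiniteDimensional ℂ H) : Infinite (hsIdx H) := by
  refine not_finite_iff_infinite.mp fun _ => h ?_
  have := Fintype.ofFinite (hsIdx H)
  exact (hsBasis H).toOrthonormalBasis.toBasis.finiteDimensional_of_finite

lemma hsNorm_sq (T : H →L[ℂ] H) : hsNorm T ^ 2 = ∑' i, ‖T (hsBasis H i)‖ ^ 2 :=
  Real.sq_sqrt (tsum_nonneg fun _ => sq_nonneg _)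

lemma isHS_rankOne (x y : H) : IsHS (rankOne ℂ x y) := by
  simpa [IsHS, norm_smul, mul_pow, norm_inner_symm y] using
    ((hsBasis H).orthonormal.inner_products_summable y).mul_right (‖x‖ ^ 2)

lemma hsNorm_rankOne_le (x y : H) : hsNorm (rankOne ℂ x y) ≤ ‖x‖ * ‖y‖ := by
  refine Real.sqrt_le_iff.mpr ⟨by positivity, ?_⟩
  simp only [rankOne_apply, norm_smul, mul_pow, norm_inner_symm y]
  rw [tsum_mul_right, mul_comm]
  gcongr
  exact (hsBasis H).orthonormal.tsum_inner_products_le y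

lemma IsHS.summable_comp_embedding {ι : Type*} {T : H →L[ℂ] H} (hT : IsHS T)
    (u : ι ↪ hsIdx H) :
    Summable fun n => ‖T (hsBasis H (u n))‖ ^ 2 :=
  hT.comp_injective u.injective

lemma IsHS.tsum_comp_embedding_le {ι : Type*} {T : H →L[ℂ] H} (hT : IsHS T)
    (u : ι ↪ hsIdx H) :
    ∑' n, ‖T (hsBasis H (u n))‖ ^ 2 ≤ hsNorm T ^ 2 :=
  hsNorm_sq T ▸ (hT.summable_comp_embedding u).tsum_le_tsum_of_inj u u.injective
    (fun _ _ => sq_nonneg _) (fun _ => le_rfl) hT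

lemma rankOne_hsBasis_mem_unitBall (k l : hsIdx H) :
    IsHS (rankOne ℂ (hsBasis H k) (hsBasis H l)) ∧
      hsNorm (rankOne ℂ (hsBasis H k) (hsBasis H l)) ≤ 1 :=
  ⟨isHS_rankOne _ _, (hsNorm_rankOne_le _ _).trans <| by
    simp [(hsBasis H).orthonormal.1 k, (hsBasis H).orthonormal.1 l]⟩

def matrixCoeff {ι : Type*} (u : ι ↪ hsIdx H) : (H →L[ℂ] H) →ₗ[ℂ] ι × ι → ℂ where
  toFun S p := ⟪hsBasis H (u p.2), S (hsBasis H (u p.1))⟫_ℂ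
  map_add' S S' := by ext p; simp
  map_smul' c S := by ext p; simp

lemma matrixCoeff_apply {ι : Type*} (u : ι ↪ hsIdx H) (S : H →L[ℂ] H) (p : ι × ι) :
    matrixCoeff u S p = ⟪hsBasis H (u p.2), S (hsBasis H (u p.1))⟫_ℂ := rfl

lemma orthonormal_hsBasis_comp {ι : Type*} (u : ι ↪ hsIdx H) :
    Orthonormal ℂ fun n => hsBasis H (u n) :=
  (hsBasis H).orthonormal.comp u u.injective

lemma IsHS.summable_norm_matrixCoeff_sq {ι : Type*} {S : H →L[ℂ] H} (hS : IsHS S)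
    (u : ι ↪ hsIdx H) : Summable fun p => ‖matrixCoeff u S p‖ ^ 2 :=
  (orthonormal_hsBasis_comp u).summable_norm_inner_apply_sq (hS.summable_comp_embedding u)

lemma IsHS.sqrt_tsum_norm_matrixCoeff_sq_le {ι : Type*} {S : H →L[ℂ] H} (hS : IsHS S)
    (u : ι ↪ hsIdx H) : √(∑' p, ‖matrixCoeff u S p‖ ^ 2) ≤ hsNorm S :=
  Real.sqrt_le_iff.mpr ⟨Real.sqrt_nonneg _, .trans
    ((orthonormal_hsBasis_comp u).tsum_norm_inner_apply_sq_le (hS.summable_comp_embedding u))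
    (hS.tsum_comp_embedding_le u)⟩

lemma matrixCoeff_rankOne {ι : Type*} [DecidableEq ι] (u : ι ↪ hsIdx H) (i j : ι) :
    matrixCoeff u (rankOne ℂ (hsBasis H (u i)) (hsBasis H (u j))) = Pi.single (j, i) 1 := by
  ext ⟨n, m⟩
  have hδ := orthonormal_iff_ite.mp (orthonormal_hsBasis_comp u)
  simp only [matrixCoeff_apply, rankOne_apply, inner_smul_right, hδ, Pi.single_apply,
    Prod.mk.injEq]
  by_cases hn : j = n <;> by_cases hm : m = i <;> simp [hn, hm, eq_comm]

def triangularPairing (a b : ℕ × ℕ → ℂ) : ℂ :=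
  ∑' p : ℕ × ℕ, if p.1 ≤ p.2 then a p * b p else 0

section TriangularPairing

variable {a a' b b' : ℕ × ℕ → ℂ}

lemma norm_triangular_mul_le (p : ℕ × ℕ) :
    ‖if p.1 ≤ p.2 then a p * b p else 0‖ ≤ ‖a p‖ * ‖b p‖ := by
  split_ifs <;> simp [mul_nonneg]

lemma summable_triangular_mul (ha : Summable fun p => ‖a p‖ ^ 2)
    (hb : Summable fun p => ‖b p‖ ^ 2) :
    Summable fun p : ℕ × ℕ => if p.1 ≤ p.2 then a p * b p else 0 :=
  .of_norm_bounded (summable_mul_and_tsum_mul_le_sqrt_mul_sqrt (fun p => norm_nonneg (a p))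
    (fun p => norm_nonneg (b p)) ha hb).1 norm_triangular_mul_le

lemma norm_triangularPairing_le (ha : Summable fun p => ‖a p‖ ^ 2)
    (hb : Summable fun p => ‖b p‖ ^ 2) :
    ‖triangularPairing a b‖ ≤ √(∑' p, ‖a p‖ ^ 2) * √(∑' p, ‖b p‖ ^ 2) := by
  obtain ⟨hab, hcs⟩ := summable_mul_and_tsum_mul_le_sqrt_mul_sqrt (fun p => norm_nonneg (a p))
    (fun p => norm_nonneg (b p)) ha hb
  calc ‖triangularPairing a b‖
      ≤ ∑' p : ℕ × ℕ, ‖if p.1 ≤ p.2 then a p * b p else 0‖ :=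
        norm_tsum_le_tsum_norm (summable_triangular_mul ha hb).norm
    _ ≤ ∑' p, ‖a p‖ * ‖b p‖ :=
        Summable.tsum_le_tsum norm_triangular_mul_le (summable_triangular_mul ha hb).norm hab
    _ ≤ √(∑' p, ‖a p‖ ^ 2) * √(∑' p, ‖b p‖ ^ 2) := hcs

lemma triangularPairing_add_left (ha : Summable fun p => ‖a p‖ ^ 2)
    (ha' : Summable fun p => ‖a' p‖ ^ 2) (hb : Summable fun p => ‖b p‖ ^ 2) :
    triangularPairing (a + a') b = triangularPairing a b + triangularPairing a' b := by
  rw [triangularPairing, triangularPairing, triangularPairing,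
    ← (summable_triangular_mul ha hb).tsum_add (summable_triangular_mul ha' hb)]
  congr with p
  split_ifs <;> simp [add_mul]

lemma triangularPairing_add_right (ha : Summable fun p => ‖a p‖ ^ 2)
    (hb : Summable fun p => ‖b p‖ ^ 2) (hb' : Summable fun p => ‖b' p‖ ^ 2) :
    triangularPairing a (b + b') = triangularPairing a b + triangularPairing a b' := by
  rw [triangularPairing, triangularPairing, triangularPairing,
    ← (summable_triangular_mul ha hb).tsum_add (summable_triangular_mul ha hb')]
  congr with p
  split_ifs <;> simp [mul_add]

lemma triangularPairing_smul_left (c : ℂ) :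
    triangularPairing (c • a) b = c * triangularPairing a b := by
  rw [triangularPairing, triangularPairing, ← tsum_mul_left]
  congr with p
  split_ifs <;> simp [mul_assoc]

lemma triangularPairing_smul_right (c : ℂ) :
    triangularPairing a (c • b) = c * triangularPairing a b := by
  rw [triangularPairing, triangularPairing, ← tsum_mul_left]
  congr with p
  split_ifs <;> simp [mul_left_comm]

lemma triangularPairing_single (q : ℕ × ℕ) (x y : ℂ) :
    triangularPairing (Pi.single q x) (Pi.single q y) = if q.1 ≤ q.2 then x * y else 0 := by
  rw [triangularPairing, tsum_eq_single q fun p hp => by simp [hp]]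
  simp

end TriangularPairing

def triangularForm (u : ℕ ↪ hsIdx H₁) (v : ℕ ↪ hsIdx H₂) (S : H₁ →L[ℂ] H₁)
    (T : H₂ →L[ℂ] H₂) : ℂ :=
  triangularPairing (matrixCoeff u S) (matrixCoeff v T)

lemma isHSBilinearForm_triangularForm (u : ℕ ↪ hsIdx H₁) (v : ℕ ↪ hsIdx H₂) :
    IsHSBilinearForm (triangularForm u v) where
  add_left S S' T hS hS' hT := by
    simp only [triangularForm, map_add]
    exact triangularPairing_add_left (hS.summable_norm_matrixCoeff_sq u)
      (hS'.summable_norm_matrixCoeff_sq u) (hT.summable_norm_matrixCoeff_sq v)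
  smul_left c S T _ _ := by
    simp only [triangularForm, map_smul, triangularPairing_smul_left]
  add_right S T T' hS hT hT' := by
    simp only [triangularForm, map_add]
    exact triangularPairing_add_right (hS.summable_norm_matrixCoeff_sq u)
      (hT.summable_norm_matrixCoeff_sq v) (hT'.summable_norm_matrixCoeff_sq v)
  smul_right c S T _ _ := by
    simp only [triangularForm, map_smul, triangularPairing_smul_right]
  bound := ⟨1, fun S T hS hT => by
    rw [one_mul]
    exact (norm_triangularPairing_le (hS.summable_norm_matrixCoeff_sq u)
      (hT.summable_norm_matrixCoeff_sq v)).trans (mul_le_mul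
        (hS.sqrt_tsum_norm_matrixCoeff_sq_le u) (hT.sqrt_tsum_norm_matrixCoeff_sq_le v)
        (Real.sqrt_nonneg _) (Real.sqrt_nonneg _))⟩

lemma triangularForm_rankOne (u : ℕ ↪ hsIdx H₁) (v : ℕ ↪ hsIdx H₂) (i j : ℕ) :
    triangularForm u v (rankOne ℂ (hsBasis H₁ (u i)) (hsBasis H₁ (u j)))
      (rankOne ℂ (hsBasis H₂ (v i)) (hsBasis H₂ (v j))) = if j ≤ i then 1 else 0 := by
  simp [triangularForm, matrixCoeff_rankOne, triangularPairing_single]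

/-- If `H₁` and `H₂` are infinite-dimensional complex Hilbert spaces, then
there are a bounded bilinear form `m` on `S_2(H₁) × S_2(H₂)` and sequences `(S i)`, `(S' j)`
in the closed unit ball of `S_2(H₁)` and `(T i)`, `(T' j)` in the closed unit ball of
`S_2(H₂)` such that `lim_i lim_j m (Sᵢ S̃ⱼ) (Tᵢ T̃ⱼ) = 0` while
`lim_j lim_i m (Sᵢ S̃ⱼ) (Tᵢ T̃ⱼ) = 1`; in particular `m` is not biregular. -/
theorem exists_not_biregular_of_infiniteDimensional
    (h₁ : ¬ FiniteDimensional ℂ H₁) (h₂ : ¬ FiniteDimensional ℂ H₂) :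
    ∃ m : (H₁ →L[ℂ] H₁) → (H₂ →L[ℂ] H₂) → ℂ, IsHSBilinearForm m ∧
      ∃ (S S' : ℕ → H₁ →L[ℂ] H₁) (T T' : ℕ → H₂ →L[ℂ] H₂),
        (∀ i, IsHS (S i) ∧ hsNorm (S i) ≤ 1) ∧ (∀ j, IsHS (S' j) ∧ hsNorm (S' j) ≤ 1) ∧
        (∀ i, IsHS (T i) ∧ hsNorm (T i) ≤ 1) ∧ (∀ j, IsHS (T' j) ∧ hsNorm (T' j) ≤ 1) ∧
        ∃ g h : ℕ → ℂ,
          (∀ i, Tendsto (fun j => m (S i * S' j) (T i * T' j)) atTop (𝓝 (g i))) ∧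
          Tendsto g atTop (𝓝 0) ∧
          (∀ j, Tendsto (fun i => m (S i * S' j) (T i * T' j)) atTop (𝓝 (h j))) ∧
          Tendsto h atTop (𝓝 1) := by
  have := infinite_hsIdx h₁
  have := infinite_hsIdx h₂
  let u := Infinite.natEmbedding (hsIdx H₁)
  let v := Infinite.natEmbedding (hsIdx H₂)
  let e n := hsBasis H₁ (u n)
  let f n := hsBasis H₂ (v n)
  have hvalue (i j : ℕ) : triangularForm u v (rankOne ℂ (e i) (e 0) * rankOne ℂ (e 0) (e j))
      (rankOne ℂ (f i) (f 0) * rankOne ℂ (f 0) (f j)) = if j ≤ i then 1 else 0 := by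
    rw [rankOne_mul_rankOne_of_norm_eq_one ((hsBasis H₁).orthonormal.1 _),
      rankOne_mul_rankOne_of_norm_eq_one ((hsBasis H₂).orthonormal.1 _), triangularForm_rankOne]
  refine ⟨triangularForm u v, isHSBilinearForm_triangularForm u v,
    fun i => rankOne ℂ (e i) (e 0), fun j => rankOne ℂ (e 0) (e j),
    fun i => rankOne ℂ (f i) (f 0), fun j => rankOne ℂ (f 0) (f j),
    fun _ => rankOne_hsBasis_mem_unitBall _ _, fun _ => rankOne_hsBasis_mem_unitBall _ _,
    fun _ => rankOne_hsBasis_mem_unitBall _ _, fun _ => rankOne_hsBasis_mem_unitBall _ _,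
    fun _ => 0, fun _ => 1, fun i => ?_, tendsto_const_nhds, fun j => ?_, tendsto_const_nhds⟩
  · refine tendsto_const_nhds.congr' ?_
    filter_upwards [eventually_gt_atTop i] with j hj
    simp [hvalue, hj.not_ge]
  · refine tendsto_const_nhds.congr' ?_
    filter_upwards [eventually_ge_atTop j] with i hi
    simp [hvalue, hi]
end
end

section
/- Let A be a Banach algebra satisfying the double-limit criterion for Arens regularity, i.e. for every μ ∈ A* and all bounded sequences (a_i), (ã_j) in A such that the iterated limits lim_i lim_j μ(a_i ã_j) and lim_j lim_i μ(a_i ã_j) both exist, these limits are equal. Let B be a finite-dimensional Banach algebra. Then every bounded bilinear form m : A × B → ℂ is biregular. -/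
/-!
Pass to subsequences along which `b i → β` and `b' j → β'` (the unit ball of `B` is compact).
Then `m (a i * a' j) (b i * b' j)` differs from `μ (a i * a' j)`, where `μ = m (·) (β * β')`, by at
most `ε i + δ j` with `ε, δ → 0`, and such a perturbation does not change iterated limits. Since
`μ (a i * a' j)` is bounded, a Tychonoff diagonal argument yields further subsequences along which
all of its row and column limits exist, and the double-limit criterion for `μ` concludes.
-/

open Filter Topology Metric

section IteratedLimits

variable {E : Type*} [PseudoMetricSpace E]

def HasIteratedLimits (F : ℕ → ℕ → E) (L₁ L₂ : E) : Prop :=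
  ∃ g h : ℕ → E, (∀ i, Tendsto (F i) atTop (𝓝 (g i))) ∧ Tendsto g atTop (𝓝 L₁) ∧
    (∀ j, Tendsto (fun i => F i j) atTop (𝓝 (h j))) ∧ Tendsto h atTop (𝓝 L₂)

variable {F G : ℕ → ℕ → E} {L₁ L₂ : E}

theorem HasIteratedLimits.comp_strictMono (hF : HasIteratedLimits F L₁ L₂) {φ ψ : ℕ → ℕ}
    (hφ : StrictMono φ) (hψ : StrictMono ψ) :
    HasIteratedLimits (fun i j => F (φ i) (ψ j)) L₁ L₂ := by
  obtain ⟨g, h, hg, hgL, hh, hhL⟩ := hF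
  exact ⟨g ∘ φ, h ∘ ψ, fun i => (hg (φ i)).comp hψ.tendsto_atTop, hgL.comp hφ.tendsto_atTop,
    fun j => (hh (ψ j)).comp hφ.tendsto_atTop, hhL.comp hψ.tendsto_atTop⟩

theorem tendsto_of_tendsto_rowLimits_of_dist_le {g g' : ℕ → E} {L : E} {ε δ : ℕ → ℝ}
    (hε : Tendsto ε atTop (𝓝 0)) (hδ : Tendsto δ atTop (𝓝 0))
    (hFG : ∀ i j, dist (F i j) (G i j) ≤ ε i + δ j)
    (hF : ∀ i, Tendsto (F i) atTop (𝓝 (g i))) (hG : ∀ i, Tendsto (G i) atTop (𝓝 (g' i)))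
    (hg : Tendsto g atTop (𝓝 L)) : Tendsto g' atTop (𝓝 L) := by
  have hclose : ∀ i, dist (g i) (g' i) ≤ ε i := fun i => by
    simpa using le_of_tendsto_of_tendsto' ((hF i).dist (hG i))
      (tendsto_const_nhds.add hδ) (hFG i)
  exact hg.congr_dist (squeeze_zero (fun _ => dist_nonneg) hclose hε)

theorem HasIteratedLimits.of_dist_le (hF : HasIteratedLimits F L₁ L₂) {ε δ : ℕ → ℝ}
    (hε : Tendsto ε atTop (𝓝 0)) (hδ : Tendsto δ atTop (𝓝 0))
    (hFG : ∀ i j, dist (F i j) (G i j) ≤ ε i + δ j)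
    (hG_rows : ∀ i, ∃ c, Tendsto (G i) atTop (𝓝 c))
    (hG_cols : ∀ j, ∃ c, Tendsto (fun i => G i j) atTop (𝓝 c)) :
    HasIteratedLimits G L₁ L₂ := by
  obtain ⟨g, h, hg, hgL, hh, hhL⟩ := hF
  choose g' hg' using hG_rows
  choose h' hh' using hG_cols
  refine ⟨g', h', hg', tendsto_of_tendsto_rowLimits_of_dist_le hε hδ hFG hg hg' hgL, hh', ?_⟩
  exact tendsto_of_tendsto_rowLimits_of_dist_le (F := fun j i => F i j) (G := fun j i => G i j)
    hδ hε (fun j i => (hFG i j).trans_eq (add_comm _ _)) hh hh' hhL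

end IteratedLimits

section Extraction

variable {E : Type*} [PseudoMetricSpace E] {K : Set E}

theorem IsCompact.exists_strictMono_forall_tendsto (hK : IsCompact K) {x : ℕ → ℕ → E}
    (hx : ∀ n k, x n k ∈ K) :
    ∃ ψ : ℕ → ℕ, StrictMono ψ ∧ ∀ k, ∃ c, Tendsto (fun n => x (ψ n) k) atTop (𝓝 c) := by
  obtain ⟨c, -, ψ, hψ, hlim⟩ := (isCompact_univ_pi fun _ : ℕ => hK).tendsto_subseq
    (fun n => Set.mem_univ_pi.2 (hx n))
  exact ⟨ψ, hψ, fun k => ⟨c k, tendsto_pi_nhds.1 hlim k⟩⟩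

theorem IsCompact.exists_strictMono_tendsto_rows_cols (hK : IsCompact K) {G : ℕ → ℕ → E}
    (hG : ∀ i j, G i j ∈ K) :
    ∃ φ ψ : ℕ → ℕ, StrictMono φ ∧ StrictMono ψ ∧
      (∀ i, ∃ c, Tendsto (fun j => G (φ i) (ψ j)) atTop (𝓝 c)) ∧
      (∀ j, ∃ c, Tendsto (fun i => G (φ i) (ψ j)) atTop (𝓝 c)) := by
  obtain ⟨ψ, hψ, hrows⟩ := hK.exists_strictMono_forall_tendsto (x := fun j i => G i j)
    fun j i => hG i j
  obtain ⟨φ, hφ, hcols⟩ := hK.exists_strictMono_forall_tendsto (x := fun i j => G i (ψ j))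
    fun i j => hG i (ψ j)
  exact ⟨φ, ψ, hφ, hψ, fun i => hrows (φ i), hcols⟩

end Extraction

theorem norm_mul_sub_mul_le_of_norm_le_one {R : Type*} [NonUnitalSeminormedRing R]
    {x x' y y' : R} (hx' : ‖x'‖ ≤ 1) (hy : ‖y‖ ≤ 1) :
    ‖x * x' - y * y'‖ ≤ ‖x - y‖ + ‖x' - y'‖ :=
  calc ‖x * x' - y * y'‖ = ‖(x - y) * x' + y * (x' - y')‖ := by noncomm_ring
    _ ≤ ‖x - y‖ * ‖x'‖ + ‖y‖ * ‖x' - y'‖ :=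
      (norm_add_le _ _).trans (add_le_add (norm_mul_le _ _) (norm_mul_le _ _))
    _ ≤ ‖x - y‖ + ‖x' - y'‖ := by
      gcongr
      · exact mul_le_of_le_one_right (norm_nonneg _) hx'
      · exact mul_le_of_le_one_left (norm_nonneg _) hy

theorem ContinuousLinearMap.dist_apply_mul_apply_mul_le {𝕜 E B G : Type*}
    [NontriviallyNormedField 𝕜] [SeminormedAddCommGroup E] [NormedSpace 𝕜 E]
    [NonUnitalSeminormedRing B] [NormedSpace 𝕜 B] [SeminormedAddCommGroup G] [NormedSpace 𝕜 G]
    (m : E →L[𝕜] B →L[𝕜] G) {x : E} {y y' β β' : B} (hx : ‖x‖ ≤ 1) (hy' : ‖y'‖ ≤ 1)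
    (hβ : ‖β‖ ≤ 1) :
    dist (m x (y * y')) (m x (β * β')) ≤ ‖m‖ * ‖y - β‖ + ‖m‖ * ‖y' - β'‖ :=
  calc dist (m x (y * y')) (m x (β * β')) = ‖m x (y * y' - β * β')‖ := by
        rw [dist_eq_norm, map_sub]
    _ ≤ ‖m‖ * ‖x‖ * ‖y * y' - β * β'‖ := m.le_opNorm₂ x _
    _ ≤ ‖m‖ * 1 * (‖y - β‖ + ‖y' - β'‖) := by
      gcongr
      exact norm_mul_sub_mul_le_of_norm_le_one hy' hβ
    _ = ‖m‖ * ‖y - β‖ + ‖m‖ * ‖y' - β'‖ := by ring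

theorem biregular_of_arens_regular_of_finiteDimensional_general
    {A B : Type}
    [NonUnitalNormedRing A] [NormedSpace ℂ A]
    [NonUnitalNormedRing B] [NormedSpace ℂ B] [FiniteDimensional ℂ B]
    (hA : ∀ (μ : A →L[ℂ] ℂ) (a a' : ℕ → A),
      (∃ C : ℝ, ∀ i, ‖a i‖ ≤ C) → (∃ C : ℝ, ∀ j, ‖a' j‖ ≤ C) →
      ∀ (g h : ℕ → ℂ) (L₁ L₂ : ℂ),
        (∀ i, Tendsto (fun j => μ (a i * a' j)) atTop (𝓝 (g i))) →
        Tendsto g atTop (𝓝 L₁) →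
        (∀ j, Tendsto (fun i => μ (a i * a' j)) atTop (𝓝 (h j))) →
        Tendsto h atTop (𝓝 L₂) → L₁ = L₂)
    (m : A →L[ℂ] B →L[ℂ] ℂ)
    (a a' : ℕ → A) (b b' : ℕ → B)
    (ha : ∀ i, ‖a i‖ ≤ 1) (ha' : ∀ j, ‖a' j‖ ≤ 1)
    (hb : ∀ i, ‖b i‖ ≤ 1) (hb' : ∀ j, ‖b' j‖ ≤ 1)
    (g h : ℕ → ℂ) (L₁ L₂ : ℂ)
    (hg : ∀ i, Tendsto (fun j => m (a i * a' j) (b i * b' j)) atTop (𝓝 (g i)))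
    (hgL : Tendsto g atTop (𝓝 L₁))
    (hh : ∀ j, Tendsto (fun i => m (a i * a' j) (b i * b' j)) atTop (𝓝 (h j)))
    (hhL : Tendsto h atTop (𝓝 L₂)) :
    L₁ = L₂ := by
  obtain ⟨β, hβ, φ₀, hφ₀, hbβ⟩ := (isCompact_closedBall (0 : B) 1).tendsto_subseq
    fun i => mem_closedBall_zero_iff.2 (hb i)
  obtain ⟨β', -, ψ₀, hψ₀, hb'β'⟩ := (isCompact_closedBall (0 : B) 1).tendsto_subseq
    fun j => mem_closedBall_zero_iff.2 (hb' j)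
  have haa' (i j : ℕ) : ‖a i * a' j‖ ≤ 1 := by
    simpa using norm_mul_le_of_le (ha i) (ha' j)
  set μ := m.flip (β * β')
  have hμ (i j : ℕ) : μ (a i * a' j) ∈ closedBall 0 ‖μ‖ :=
    mem_closedBall_zero_iff.2 <| μ.le_of_opNorm_le_of_le le_rfl (haa' i j) |>.trans_eq (mul_one _)
  obtain ⟨φ₁, ψ₁, hφ₁, hψ₁, hrows, hcols⟩ :=
    (isCompact_closedBall (0 : ℂ) ‖μ‖).exists_strictMono_tendsto_rows_cols
      (G := fun i j => μ (a (φ₀ i) * a' (ψ₀ j))) fun i j => hμ _ _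
  have hsmall {u : ℕ → B} {v : B} (huv : Tendsto u atTop (𝓝 v)) {θ : ℕ → ℕ}
      (hθ : StrictMono θ) : Tendsto (fun n => ‖m‖ * ‖u (θ n) - v‖) atTop (𝓝 0) := by
    simpa using ((tendsto_iff_norm_sub_tendsto_zero.1 huv).comp hθ.tendsto_atTop).const_mul ‖m‖
  have hF : HasIteratedLimits (fun i j => m (a i * a' j) (b i * b' j)) L₁ L₂ :=
    ⟨g, h, hg, hgL, hh, hhL⟩
  obtain ⟨g', h', hg', hg'L, hh', hh'L⟩ :=
    (hF.comp_strictMono (hφ₀.comp hφ₁) (hψ₀.comp hψ₁)).of_dist_le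
      (hsmall hbβ hφ₁) (hsmall hb'β' hψ₁)
      (fun i j => m.dist_apply_mul_apply_mul_le (haa' _ _) (hb' _) (mem_closedBall_zero_iff.1 hβ))
      hrows hcols
  exact hA μ _ _ ⟨1, fun i => ha _⟩ ⟨1, fun j => ha' _⟩ g' h' L₁ L₂ hg' hg'L hh' hh'L

/-- **Statement 5.** Let `A` be a Banach algebra satisfying the double-limit criterion for
Arens regularity and let `B` be a finite-dimensional Banach algebra. Then every bounded
bilinear form `m : A × B → ℂ` is biregular. -/
theorem biregular_of_arens_regular_of_finiteDimensional
    {A B : Type}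
    [NonUnitalNormedRing A] [NormedSpace ℂ A] [IsScalarTower ℂ A A] [SMulCommClass ℂ A A]
    [CompleteSpace A]
    [NonUnitalNormedRing B] [NormedSpace ℂ B] [IsScalarTower ℂ B B] [SMulCommClass ℂ B B]
    [CompleteSpace B] [FiniteDimensional ℂ B]
    (hA : ∀ (μ : A →L[ℂ] ℂ) (a a' : ℕ → A),
      (∃ C : ℝ, ∀ i, ‖a i‖ ≤ C) → (∃ C : ℝ, ∀ j, ‖a' j‖ ≤ C) →
      ∀ (g h : ℕ → ℂ) (L₁ L₂ : ℂ),
        (∀ i, Tendsto (fun j => μ (a i * a' j)) atTop (𝓝 (g i))) →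
        Tendsto g atTop (𝓝 L₁) →
        (∀ j, Tendsto (fun i => μ (a i * a' j)) atTop (𝓝 (h j))) →
        Tendsto h atTop (𝓝 L₂) → L₁ = L₂)
    (m : A →L[ℂ] B →L[ℂ] ℂ)
    (a a' : ℕ → A) (b b' : ℕ → B)
    (ha : ∀ i, ‖a i‖ ≤ 1) (ha' : ∀ j, ‖a' j‖ ≤ 1)
    (hb : ∀ i, ‖b i‖ ≤ 1) (hb' : ∀ j, ‖b' j‖ ≤ 1)
    (g h : ℕ → ℂ) (L₁ L₂ : ℂ)
    (hg : ∀ i, Tendsto (fun j => m (a i * a' j) (b i * b' j)) atTop (𝓝 (g i)))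
    (hgL : Tendsto g atTop (𝓝 L₁))
    (hh : ∀ j, Tendsto (fun i => m (a i * a' j) (b i * b' j)) atTop (𝓝 (h j)))
    (hhL : Tendsto h atTop (𝓝 L₂)) :
    L₁ = L₂ :=
  biregular_of_arens_regular_of_finiteDimensional_general hA m a a' b b' ha ha' hb hb' g h L₁ L₂ hg
    hgL hh hhL
end

section
/- Let H be a separable infinite-dimensional complex Hilbert space with a fixed orthonormal basis (e_n)_{n∈ℕ}. If (V^{(i)}) is a bounded sequence in S_2(H) converging weakly to V in the Hilbert space S_2(H), then for every U ∈ S_2(H) the Schur products V^{(i)} ⋆ U converge to V ⋆ U in the Hilbert–Schmidt norm ‖·‖_2. -/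
open Filter Topology

noncomputable section

variable {H : Type} [NormedAddCommGroup H] [InnerProductSpace ℂ H] [CompleteSpace H]

/-- The matrix entry `T_{rs} = ⟨T e_s, e_r⟩` of an operator with respect to the fixed
orthonormal basis `(e_n) = b`. -/
def entry (b : HilbertBasis ℕ ℂ H) (T : H →L[ℂ] H) (r s : ℕ) : ℂ := inner ℂ (b r) (T (b s))

/-- `T` is a Hilbert–Schmidt operator, i.e. its matrix is square-summable. -/
def IsHSb (b : HilbertBasis ℕ ℂ H) (T : H →L[ℂ] H) : Prop :=
  Summable fun rs : ℕ × ℕ => ‖entry b T rs.1 rs.2‖ ^ 2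

/-- The Hilbert–Schmidt norm `‖T‖₂`. -/
def hsNormb (b : HilbertBasis ℕ ℂ H) (T : H →L[ℂ] H) : ℝ :=
  Real.sqrt (∑' rs : ℕ × ℕ, ‖entry b T rs.1 rs.2‖ ^ 2)

/-- The Hilbert–Schmidt inner product `⟨S, W⟩ = Tr (W* S) = ∑ conj (W_{rs}) * S_{rs}`. -/
def hsInnerb (b : HilbertBasis ℕ ℂ H) (S W : H →L[ℂ] H) : ℂ :=
  ∑' rs : ℕ × ℕ, starRingEnd ℂ (entry b W rs.1 rs.2) * entry b S rs.1 rs.2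

/-- `W` is the Schur (entrywise) product `S ⋆ U` with respect to the basis `b`:
`W_{rs} = S_{rs} U_{rs}` for all `r, s`. -/
def IsSchurProd (b : HilbertBasis ℕ ℂ H) (S U W : H →L[ℂ] H) : Prop :=
  ∀ r s, entry b W r s = entry b S r s * entry b U r s


lemma entry_sub' (b : HilbertBasis ℕ ℂ H) (A B : H →L[ℂ] H) (r s : ℕ) :
    entry b (A - B) r s = entry b A r s - entry b B r s := by
  simp [entry, inner_sub_right]

/-- the matrix unit `E_{rs}` -/
def matUnit (b : HilbertBasis ℕ ℂ H) (r s : ℕ) : H →L[ℂ] H :=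
  (innerSL ℂ (b s)).smulRight (b r)

lemma entry_matUnit (b : HilbertBasis ℕ ℂ H) (r s r' s' : ℕ) :
    entry b (matUnit b r s) r' s' = if r' = r ∧ s' = s then 1 else 0 := by
  have hb := orthonormal_iff_ite.mp b.orthonormal
  simp only [entry, matUnit, ContinuousLinearMap.smulRight_apply, innerSL_apply_apply,
    inner_smul_right, hb]
  by_cases h1 : s = s' <;> by_cases h2 : r' = r <;>
    simp [h1, h2, eq_comm]

lemma isHSb_matUnit (b : HilbertBasis ℕ ℂ H) (r s : ℕ) : IsHSb b (matUnit b r s) := by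
  apply summable_of_ne_finset_zero (s := {((r : ℕ), (s : ℕ))})
  intro rs hrs
  have : ¬(rs.1 = r ∧ rs.2 = s) := by
    intro ⟨h1, h2⟩
    exact hrs (by simp [Finset.mem_singleton, Prod.ext_iff, h1, h2])
  simp [entry_matUnit, this]

lemma hsInnerb_matUnit (b : HilbertBasis ℕ ℂ H) (S : H →L[ℂ] H) (r s : ℕ) :
    hsInnerb b S (matUnit b r s) = entry b S r s := by
  unfold hsInnerb
  rw [tsum_eq_single ((r : ℕ), (s : ℕ))]
  · simp [entry_matUnit]
  · intro rs hrs
    have : ¬(rs.1 = r ∧ rs.2 = s) := by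
      intro ⟨h1, h2⟩
      exact hrs (by simp [Prod.ext_iff, h1, h2])
    simp [entry_matUnit, this]

/-- **Statement 12.** Let `H` be a separable infinite-dimensional complex Hilbert space with a
fixed orthonormal basis `b = (e_n)_{n ∈ ℕ}`. If `(V i)` is a bounded sequence in `S_2(H)`
converging weakly to `Vl` in the Hilbert space `S_2(H)`, then for every `U ∈ S_2(H)` the
Schur products `V i ⋆ U` converge to `Vl ⋆ U` in the Hilbert–Schmidt norm. -/
theorem schur_mul_weak_to_norm_continuous
    {H : Type} [NormedAddCommGroup H] [InnerProductSpace ℂ H] [CompleteSpace H]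
    (b : HilbertBasis ℕ ℂ H)
    (V : ℕ → H →L[ℂ] H) (Vl U : H →L[ℂ] H)
    (hV : ∀ i, IsHSb b (V i)) (hVl : IsHSb b Vl) (hU : IsHSb b U)
    (hbdd : ∃ C : ℝ, ∀ i, hsNormb b (V i) ≤ C)
    (hweak : ∀ W, IsHSb b W →
      Tendsto (fun i => hsInnerb b (V i) W) atTop (𝓝 (hsInnerb b Vl W)))
    (VU : ℕ → H →L[ℂ] H) (VlU : H →L[ℂ] H)
    (hVU : ∀ i, IsHSb b (VU i) ∧ IsSchurProd b (V i) U (VU i))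
    (hVlU : IsHSb b VlU ∧ IsSchurProd b Vl U VlU) :
    Tendsto (fun i => hsNormb b (VU i - VlU)) atTop (𝓝 0) := by
  classical
  obtain ⟨C, hC⟩ := hbdd
  have hCnn : 0 ≤ C := le_trans (Real.sqrt_nonneg _) (hC 0)
  set TVl : ℝ := ∑' rs : ℕ × ℕ, ‖entry b Vl rs.1 rs.2‖ ^ 2 with hTVl
  have hTVlnn : 0 ≤ TVl := tsum_nonneg (fun rs => by positivity)
  set M : ℝ := 2 * C ^ 2 + 2 * TVl with hM
  have hMnn : 0 ≤ M := by positivity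
  -- entrywise convergence
  have hentry : ∀ r s, Tendsto (fun i => entry b (V i) r s) atTop (𝓝 (entry b Vl r s)) := by
    intro r s
    have := hweak (matUnit b r s) (isHSb_matUnit b r s)
    simpa [hsInnerb_matUnit] using this
  -- pointwise bound
  have hVsq : ∀ i (rs : ℕ × ℕ), ‖entry b (V i) rs.1 rs.2‖ ^ 2 ≤ C ^ 2 := by
    intro i rs
    have h1 : ‖entry b (V i) rs.1 rs.2‖ ^ 2 ≤
        ∑' rs : ℕ × ℕ, ‖entry b (V i) rs.1 rs.2‖ ^ 2 :=
      Summable.le_tsum (hV i) rs (fun j _ => by positivity)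
    have h2 : ∑' rs : ℕ × ℕ, ‖entry b (V i) rs.1 rs.2‖ ^ 2 ≤ C ^ 2 := by
      have := hC i
      unfold hsNormb at this
      have h3 : (0:ℝ) ≤ ∑' rs : ℕ × ℕ, ‖entry b (V i) rs.1 rs.2‖ ^ 2 :=
        tsum_nonneg (fun rs => by positivity)
      nlinarith [Real.sq_sqrt h3, Real.sqrt_nonneg (∑' rs : ℕ × ℕ, ‖entry b (V i) rs.1 rs.2‖ ^ 2)]
    linarith
  have hVlsq : ∀ (rs : ℕ × ℕ), ‖entry b Vl rs.1 rs.2‖ ^ 2 ≤ TVl := fun rs =>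
    Summable.le_tsum hVl rs (fun j _ => by positivity)
  have hbound : ∀ i (rs : ℕ × ℕ),
      ‖entry b (V i) rs.1 rs.2 - entry b Vl rs.1 rs.2‖ ^ 2 ≤ M := by
    intro i rs
    have h1 : ‖entry b (V i) rs.1 rs.2 - entry b Vl rs.1 rs.2‖ ≤
        ‖entry b (V i) rs.1 rs.2‖ + ‖entry b Vl rs.1 rs.2‖ := norm_sub_le _ _
    have h2 := hVsq i rs
    have h3 := hVlsq rs
    have h4 : (0:ℝ) ≤ ‖entry b (V i) rs.1 rs.2 - entry b Vl rs.1 rs.2‖ := norm_nonneg _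
    have h5 : ‖entry b (V i) rs.1 rs.2 - entry b Vl rs.1 rs.2‖ ^ 2 ≤
        (‖entry b (V i) rs.1 rs.2‖ + ‖entry b Vl rs.1 rs.2‖) ^ 2 := by
      apply pow_le_pow_left₀ h4 h1
    nlinarith [sq_nonneg (‖entry b (V i) rs.1 rs.2‖ - ‖entry b Vl rs.1 rs.2‖)]
  -- the function whose tsum is the squared HS norm
  set u : ℕ × ℕ → ℝ := fun rs => ‖entry b U rs.1 rs.2‖ ^ 2 with hu
  have hunn : ∀ rs, 0 ≤ u rs := fun rs => by positivity
  set g : ℕ → ℕ × ℕ → ℝ := fun i rs =>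
    ‖entry b (V i) rs.1 rs.2 - entry b Vl rs.1 rs.2‖ ^ 2 * u rs with hg
  have hgnn : ∀ i rs, 0 ≤ g i rs := fun i rs => by
    simp only [hg]; positivity
  have hgle : ∀ i rs, g i rs ≤ M * u rs := fun i rs =>
    mul_le_mul_of_nonneg_right (hbound i rs) (hunn rs)
  have hMusum : Summable (fun rs => M * u rs) := hU.mul_left M
  have hgsum : ∀ i, Summable (g i) := fun i =>
    Summable.of_nonneg_of_le (hgnn i) (hgle i) hMusum
  -- identify the norm
  have hnorm : ∀ i, hsNormb b (VU i - VlU) = Real.sqrt (∑' rs : ℕ × ℕ, g i rs) := by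
    intro i
    unfold hsNormb
    congr 1
    apply tsum_congr
    intro rs
    rw [entry_sub', (hVU i).2 rs.1 rs.2, hVlU.2 rs.1 rs.2]
    rw [← sub_mul, norm_mul, mul_pow]
  -- key: tsum g i → 0
  have hkey : Tendsto (fun i => ∑' rs : ℕ × ℕ, g i rs) atTop (𝓝 0) := by
    rw [Metric.tendsto_atTop]
    intro ε hε
    set δ : ℝ := ε / (2 * (M + 1)) with hδ
    have hδpos : 0 < δ := by positivity
    -- choose a finite set F with small tail of u
    obtain ⟨F, hF⟩ : ∃ F : Finset (ℕ × ℕ), ∑' rs : {x // x ∉ F}, u rs < δ := by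
      have := tendsto_tsum_compl_atTop_zero u
      have h := (this.eventually (gt_mem_nhds hδpos)).exists
      obtain ⟨F, hF⟩ := h
      exact ⟨F, hF⟩
    -- finite sum tends to 0
    have hfin : Tendsto (fun i => ∑ rs ∈ F, g i rs) atTop (𝓝 0) := by
      have : ∀ rs ∈ F, Tendsto (fun i => g i rs) atTop (𝓝 0) := by
        intro rs _
        have h0 : Tendsto (fun i => entry b (V i) rs.1 rs.2 - entry b Vl rs.1 rs.2)
            atTop (𝓝 (entry b Vl rs.1 rs.2 - entry b Vl rs.1 rs.2)) :=
          (hentry rs.1 rs.2).sub tendsto_const_nhds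
        rw [sub_self] at h0
        have h1 := h0
        have h2 : Tendsto (fun i => ‖entry b (V i) rs.1 rs.2 - entry b Vl rs.1 rs.2‖ ^ 2)
            atTop (𝓝 0) := by
          simpa using ((h1.norm).pow 2)
        simpa [hg] using h2.mul_const (u rs)
      have := tendsto_finset_sum F this
      simpa using this
    rw [Metric.tendsto_atTop] at hfin
    obtain ⟨N, hN⟩ := hfin (ε / 2) (by positivity)
    refine ⟨N, fun i hi => ?_⟩
    have hsplit := Summable.sum_add_tsum_compl (s := F) (hgsum i)
    have htail : ∑' rs : ↑(↑F : Set (ℕ × ℕ))ᶜ, g i rs ≤ M * δ := by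
      have h1 : ∑' rs : ↑(↑F : Set (ℕ × ℕ))ᶜ, g i rs ≤
          ∑' rs : ↑(↑F : Set (ℕ × ℕ))ᶜ, M * u rs := by
        exact Summable.tsum_le_tsum (f := fun rs : ↑(↑F : Set (ℕ × ℕ))ᶜ => g i ↑rs)
          (g := fun rs : ↑(↑F : Set (ℕ × ℕ))ᶜ => M * u ↑rs)
          (fun rs => hgle i ↑rs) ((hgsum i).subtype _) (hMusum.subtype _)
      have h2 : ∑' rs : ↑(↑F : Set (ℕ × ℕ))ᶜ, M * u rs =
          M * ∑' rs : ↑(↑F : Set (ℕ × ℕ))ᶜ, u rs := tsum_mul_left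
      have h3 : ∑' rs : ↑(↑F : Set (ℕ × ℕ))ᶜ, u (rs : ℕ × ℕ) =
          ∑' rs : {x // x ∉ F}, u rs := rfl
      have h4 : M * ∑' rs : ↑(↑F : Set (ℕ × ℕ))ᶜ, u (rs : ℕ × ℕ) ≤ M * δ := by
        apply mul_le_mul_of_nonneg_left _ hMnn
        rw [h3]; exact le_of_lt hF
      linarith
    have hhead : ∑ rs ∈ F, g i rs < ε / 2 := by
      have := hN i hi
      rw [Real.dist_eq, sub_zero] at this
      calc ∑ rs ∈ F, g i rs ≤ |∑ rs ∈ F, g i rs| := le_abs_self _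
        _ < ε / 2 := this
    have hMδ : M * δ ≤ ε / 2 := by
      have hM1 : (0:ℝ) < M + 1 := by linarith
      have heq : (M + 1) * δ = ε / 2 := by
        rw [hδ]
        field_simp
      nlinarith
    have htot : ∑' rs : ℕ × ℕ, g i rs < ε := by
      have h5 : ∑' rs : ℕ × ℕ, g i rs =
          ∑ rs ∈ F, g i rs + ∑' rs : ↑(↑F : Set (ℕ × ℕ))ᶜ, g i ↑rs := hsplit.symm
      rw [h5]
      have h6 : ε / 2 + ε / 2 = ε := by ring
      exact h6 ▸ add_lt_add_of_lt_of_le hhead (htail.trans hMδ)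
    rw [Real.dist_eq, sub_zero]
    have : (0:ℝ) ≤ ∑' rs : ℕ × ℕ, g i rs := tsum_nonneg (hgnn i)
    rw [abs_of_nonneg this]
    exact htot
  -- conclude
  have : Tendsto (fun i => Real.sqrt (∑' rs : ℕ × ℕ, g i rs)) atTop (𝓝 0) := by
    have := (Real.continuous_sqrt.tendsto 0).comp hkey
    simpa [Function.comp_def] using this
  simpa [hnorm] using this
end
end
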